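/- Let X be a Lefschetz complex over a ring R with unity, let 𝒱 be a multivector field on X, and assume X is invariant with respect to 𝒱. For R ⊆ X the following conditions are equivalent: (i) R is a repeller; (ii) R is invariant and open; (iii) R is an isolated invariant set and open; (iv) R is an isolated invariant set, open, and a backward trapping region. -/
import Mathlib


open scoped Classical

namespace CMVF

variable {R : Type*} [Ring R] {X : Type*} [Fintype X]

/-- A Lefschetz complex over `R` with cells `X`. -/
structure Lefschetz (R : Type*) [Ring R] (X : Type*) [Fintype X] where
  dim : X → ℕ
  κ : X → X → R
  dim_facet : ∀ x y, κ x y ≠ 0 → dim x = dim y + 1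
  κ_sq : ∀ x z, (∑ y : X, κ x y * κ y z) = 0

namespace Lefschetz

variable (L : Lefschetz R X)

/-- The face order `y ≤κ x` : the partial order generated by the facet relation. -/
def le (y x : X) : Prop := Relation.ReflTransGen (fun a b => L.κ b a ≠ 0) y x

/-- Closure of a set of cells: all faces of cells of `A`. -/
def cls (A : Set X) : Set X := {z | ∃ a ∈ A, L.le z a}

/-- Closure of a single cell. -/
def clPt (x : X) : Set X := L.cls {x}

/-- The minimal open set containing `x`. -/
def opn (x : X) : Set X := {z | L.le x z}

/-- `A` is closed. -/
def Closed (A : Set X) : Prop := L.cls A = A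

/-- The mouth of `A`. -/
def mo (A : Set X) : Set X := L.cls A \ A

/-- `A` is proper: its mouth is closed. -/
def Proper (A : Set X) : Prop := L.Closed (L.mo A)

/-- Relative closure within an ambient subcomplex `W`. -/
def clsIn (W A : Set X) : Set X := L.cls A ∩ W

/-- Relative mouth within an ambient subcomplex `W`. -/
def moIn (W A : Set X) : Set X := L.clsIn W A \ A

/-- The boundary operator of the subcomplex determined by `A`
(`∂ x = ∑ y ∈ A, κ x y • y` for `x ∈ A`). -/
noncomputable def bd (A : Set X) : (X → R) →ₗ[R] (X → R) where
  toFun f := fun y => if y ∈ A then ∑ x : X, (if x ∈ A then f x * L.κ x y else 0) else 0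
  map_add' f g := by
    funext y
    by_cases hy : y ∈ A
    · simp only [hy, if_true, Pi.add_apply]
      rw [← Finset.sum_add_distrib]
      refine Finset.sum_congr rfl fun x _ => ?_
      by_cases hx : x ∈ A <;> simp [hx, add_mul]
    · simp [hy]
  map_smul' r f := by
    funext y
    by_cases hy : y ∈ A
    · simp only [hy, if_true, Pi.smul_apply, smul_eq_mul, RingHom.id_apply]
      rw [Finset.mul_sum]
      refine Finset.sum_congr rfl fun x _ => ?_
      by_cases hx : x ∈ A <;> simp [hx, mul_assoc]
    · simp [hy]

/-- The `n`-chains of the subcomplex determined by `A`. -/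
noncomputable def chainGroup (A : Set X) (n : ℕ) : Submodule R (X → R) :=
  Submodule.span R {f | ∃ x ∈ A, L.dim x = n ∧ f = Pi.single x 1}

/-- The `n`-cycles of the subcomplex determined by `A`. -/
noncomputable def cycles (A : Set X) (n : ℕ) : Submodule R (X → R) :=
  L.chainGroup A n ⊓ LinearMap.ker (L.bd A)

/-- The `n`-boundaries of the subcomplex determined by `A`. -/
noncomputable def boundaries (A : Set X) (n : ℕ) : Submodule R (X → R) :=
  (L.chainGroup A (n + 1)).map (L.bd A)

/-- The Lefschetz homology `H^κ_n(A)` of the subcomplex determined by `A`. -/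
noncomputable def homology (A : Set X) (n : ℕ) : Type _ :=
  (L.cycles A n) ⧸ ((L.boundaries A n).comap (L.cycles A n).subtype)

noncomputable instance homologyAddCommGroup (A : Set X) (n : ℕ) :
    AddCommGroup (L.homology A n) :=
  inferInstanceAs (AddCommGroup
    ((L.cycles A n) ⧸ ((L.boundaries A n).comap (L.cycles A n).subtype)))

noncomputable instance homologyModule (A : Set X) (n : ℕ) :
    Module R (L.homology A n) :=
  inferInstanceAs (Module R
    ((L.cycles A n) ⧸ ((L.boundaries A n).comap (L.cycles A n).subtype)))

/-- `A` is a zero space: its Lefschetz homology vanishes. -/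
def HomologyZero (A : Set X) : Prop := ∀ n, Subsingleton (L.homology A n)

/-- The Poincaré polynomial `p_A(t) = ∑ rank H^κ_n(A) tⁿ`. -/
noncomputable def poincare (A : Set X) : Polynomial ℕ :=
  ∑ n ∈ Finset.image L.dim Finset.univ,
    Polynomial.C (Module.finrank R (L.homology A n)) * Polynomial.X ^ n

/-- `V` is a multivector: proper, with a unique maximal element. -/
def IsMV (V : Set X) : Prop :=
  L.Proper V ∧ ∃! m, m ∈ V ∧ ∀ x ∈ V, L.le x m

/-- A regular multivector: one with vanishing Lefschetz homology. -/
def Regular (V : Set X) : Prop := L.HomologyZero V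

end Lefschetz

/-- A combinatorial multivector field on a Lefschetz complex: a partition into multivectors. -/
structure MVField {R : Type*} [Ring R] {X : Type*} [Fintype X] (L : Lefschetz R X) where
  mvs : Set (Set X)
  isMV : ∀ V ∈ mvs, L.IsMV V
  cover : ∀ x : X, ∃! V, V ∈ mvs ∧ x ∈ V

namespace MVField

variable {L : Lefschetz R X} (F : MVField L)

/-- `[x]` : the multivector containing `x`. -/
noncomputable def mclass (x : X) : Set X := (F.cover x).exists.choose

lemma mclass_spec (x : X) : F.mclass x ∈ F.mvs ∧ x ∈ F.mclass x :=
  (F.cover x).exists.choose_spec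

/-- `x★` : the dominant cell of the multivector containing `x`. -/
noncomputable def star (x : X) : X :=
  ((F.isMV _ (F.mclass_spec x).1).2).exists.choose

/-- `[x]°` : the regular part of the multivector of `x`. -/
noncomputable def regPart (x : X) : Set X :=
  if L.Regular (F.mclass x) then F.mclass x else F.mclass x \ {F.star x}

/-- The multivalued map `Π_𝒱`. -/
noncomputable def Pi (x : X) : Set X :=
  if x = F.star x then L.clPt x \ F.regPart x else {F.star x}

/-- The multivalued map of the multivector field restricted to the subcomplex `W`. -/
noncomputable def PiIn (W : Set X) (x : X) : Set X := F.Pi x ∩ W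

/-- `φ : ℤ → X` is a full solution of the multivector field restricted to `W`. -/
def IsSolIn (W : Set X) (φ : ℤ → X) : Prop := ∀ i, φ (i + 1) ∈ F.PiIn W (φ i)

/-- There is a full solution (of the field restricted to `W`) through `x` with values in `A`. -/
def FullSolThroughIn (W : Set X) (x : X) (A : Set X) : Prop :=
  ∃ φ : ℤ → X, F.IsSolIn W φ ∧ (∃ i, φ i = x) ∧ ∀ i, φ i ∈ A

/-- `A` is `𝒱`-compatible. -/
def Compat (A : Set X) : Prop := ∀ x ∈ A, F.mclass x ⊆ A

/-- `[A]⁻` : the maximal `𝒱`-compatible subset of `A`. -/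
def lowerC (A : Set X) : Set X := {x ∈ A | F.mclass x ⊆ A}

/-- `[A]⁺` : the minimal `𝒱`-compatible superset of `A`. -/
def upperC (A : Set X) : Set X := ⋃ x ∈ A, F.mclass x

/-- `Inv A`, the invariant part of `A`, computed in the subcomplex `W`. -/
def InvPartIn (W A : Set X) : Set X :=
  {x ∈ A | F.FullSolThroughIn W (F.star x) (F.lowerC A)}

/-- `A` is invariant (within the subcomplex `W`). -/
def InvariantIn (W A : Set X) : Prop := F.InvPartIn W A = A

/-- `φ` is a path (solution) on the integer interval `[a,b]`, within the subcomplex `W`. -/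
def IsPathOnIn (W : Set X) (a b : ℤ) (φ : ℤ → X) : Prop :=
  ∀ i, a ≤ i → i < b → φ (i + 1) ∈ F.PiIn W (φ i)

/-- `S` admits an internal tangency within the subcomplex `W`. -/
def HasInternalTangencyIn (W S : Set X) : Prop :=
  ∃ (a b : ℤ) (φ : ℤ → X), a ≤ b ∧ F.IsPathOnIn W a b φ ∧
    (∀ i, a ≤ i → i ≤ b → φ i ∈ L.clsIn W S) ∧ φ a ∈ S ∧ φ b ∈ S ∧
    ∃ i, a ≤ i ∧ i ≤ b ∧ φ i ∈ L.moIn W S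

/-- `S` is an isolated invariant set within the subcomplex `W`. -/
def IsoInvIn (W S : Set X) : Prop :=
  F.InvariantIn W S ∧ ¬ F.HasInternalTangencyIn W S

/-- `N` is a trapping region within the subcomplex `W`. -/
def TrappingIn (W N : Set X) : Prop :=
  N ⊆ W ∧ F.Compat N ∧ ∀ x ∈ N, F.PiIn W x ⊆ N

/-- `N` is a backward trapping region within the subcomplex `W`. -/
def BackTrappingIn (W N : Set X) : Prop :=
  N ⊆ W ∧ F.Compat N ∧ ∀ x ∈ W, ∀ y ∈ F.PiIn W x, y ∈ N → x ∈ N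

/-- `A` is an attractor within the subcomplex `W`. -/
def AttractorIn (W A : Set X) : Prop :=
  ∃ N, F.TrappingIn W N ∧ A = F.InvPartIn W N

/-- `A` is a repeller within the subcomplex `W`. -/
def RepellerIn (W A : Set X) : Prop :=
  ∃ N, F.BackTrappingIn W N ∧ A = F.InvPartIn W N

/-- The α-limit set of a full solution `φ`. -/
def alphaIn (W : Set X) (φ : ℤ → X) : Set X :=
  ⋂ k : ℕ, F.InvPartIn W (F.upperC (φ '' {i : ℤ | i ≤ -(k : ℤ)}))

/-- The ω-limit set of a full solution `φ`. -/
def omegaIn (W : Set X) (φ : ℤ → X) : Set X :=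
  ⋂ k : ℕ, F.InvPartIn W (F.upperC (φ '' {i : ℤ | (k : ℤ) ≤ i}))

/-- `C(A',A)` : the set of cells lying on connections running from `A'` to `A`. -/
def ConnIn (W A' A : Set X) : Set X :=
  {x | ∃ φ : ℤ → X, F.IsSolIn W φ ∧ (∃ i, φ i = F.star x) ∧
        F.alphaIn W φ ⊆ A' ∧ F.omegaIn W φ ⊆ A}

/-- `(A, Rp)` is an attractor-repeller pair in the subcomplex `W`. -/
def ARPairIn (W A Rp : Set X) : Prop :=
  F.AttractorIn W A ∧ F.RepellerIn W Rp ∧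
    A = F.InvPartIn W (W \ Rp) ∧ Rp = F.InvPartIn W (W \ A)

/-- `M` is a Morse decomposition of the subcomplex `W`, with admissible order `le`. -/
def MorseDecompIn (W : Set X) {P : Type*} [Finite P] (le : P → P → Prop)
    (M : P → Set X) : Prop :=
  IsPartialOrder P le ∧
  (∀ r, F.IsoInvIn W (M r)) ∧
  (∀ r r', r ≠ r' → Disjoint (M r) (M r')) ∧
  (∀ φ : ℤ → X, F.IsSolIn W φ →
    ∃ r r', le r r' ∧ F.alphaIn W φ ⊆ M r' ∧ F.omegaIn W φ ⊆ M r) ∧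
  (∀ φ : ℤ → X, F.IsSolIn W φ → ∀ r,
    F.alphaIn W φ ⊆ M r → F.omegaIn W φ ⊆ M r → Set.range φ ⊆ M r)

/-- The Morse set `M(I)` of a family of sets indexed by `I ⊆ P`. -/
def MorseSetIn (W : Set X) {P : Type*} (M : P → Set X) (I : Set P) : Set X :=
  ⋃ r ∈ I, ⋃ r' ∈ I, F.ConnIn W (M r') (M r)

/-- `(P₁, P₂)` is an index pair for the isolated invariant set `S`. -/
def IndexPair (S P₁ P₂ : Set X) : Prop :=
  L.Closed P₁ ∧ L.Closed P₂ ∧ P₂ ⊆ P₁ ∧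
  (∀ x ∈ P₂, ∀ y ∈ F.Pi x, y ∈ P₁ → y ∈ P₂) ∧
  (∀ x ∈ P₁, (∃ y ∈ F.Pi x, y ∉ P₁) → x ∈ P₂) ∧
  S = F.InvPartIn Set.univ (P₁ \ P₂)

/-- `x ⤳_A y` : there is a path of length at least two in `A` from `x★` to `y★`. -/
def PathConn (A : Set X) (x y : X) : Prop :=
  ∃ (a b : ℤ) (φ : ℤ → X), a < b ∧
    (∀ i, a ≤ i → i < b → φ (i + 1) ∈ F.Pi (φ i)) ∧
    (∀ i, a ≤ i → i ≤ b → φ i ∈ A) ∧ φ a = F.star x ∧ φ b = F.star y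

/-- The chain recurrent set. -/
def CR : Set X := {x | F.PathConn Set.univ x x}

/-- `B` is a basic set: an equivalence class of mutual connectedness in `CR`. -/
def IsBasicSet (B : Set X) : Prop :=
  ∃ x ∈ F.CR, B = {y ∈ F.CR | F.PathConn Set.univ x y ∧ F.PathConn Set.univ y x}

/-- The set `E_P` of cells of `P₁` all of whose forward solutions meet `P₂`. -/
def Ep (P₁ P₂ : Set X) : Set X :=
  {x ∈ P₁ | ∀ φ : ℕ → X, φ 0 = x → (∀ i, φ (i + 1) ∈ F.Pi (φ i)) → ∃ i, φ i ∈ P₂}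

/-- The preorder `≤_𝒱` induced by the arrows of the multivector field. -/
def leV : X → X → Prop := Relation.ReflTransGen (fun y x => y ∈ F.Pi x)

/-- The multivector field is acyclic: `≤_𝒱` is a partial order. -/
def Acyclic : Prop := ∀ x y, F.leV x y → F.leV y x → x = y

end MVField

end CMVF

open CMVF

variable {R : Type*} [Ring R] {X : Type*} [Fintype X]


namespace CMVF
namespace MVField

variable {R : Type*} [Ring R] {X : Type*} [Fintype X] {L : Lefschetz R X} (F : MVField L)

lemma mclass_eq' {x y : X} (h : y ∈ F.mclass x) : F.mclass y = F.mclass x :=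
  (F.cover y).unique ⟨(F.mclass_spec y).1, (F.mclass_spec y).2⟩ ⟨(F.mclass_spec x).1, h⟩

lemma star_spec' (x : X) :
    F.star x ∈ F.mclass x ∧ ∀ z ∈ F.mclass x, L.le z (F.star x) :=
  ((F.isMV _ (F.mclass_spec x).1).2).exists.choose_spec

lemma star_eq' {x y : X} (h : y ∈ F.mclass x) : F.star y = F.star x := by
  have hm := F.mclass_eq' h
  have h1 := F.star_spec' y
  rw [hm] at h1
  exact ((F.isMV _ (F.mclass_spec x).1).2).unique ⟨h1.1, h1.2⟩
    ⟨(F.star_spec' x).1, (F.star_spec' x).2⟩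

lemma star_star' (x : X) : F.star (F.star x) = F.star x :=
  F.star_eq' (F.star_spec' x).1

lemma le_star' (x : X) : L.le x (F.star x) :=
  (F.star_spec' x).2 x (F.mclass_spec x).2

lemma lowerC_eq_self' {N : Set X} (hN : F.Compat N) : F.lowerC N = N := by
  ext x; exact ⟨fun h => h.1, fun h => ⟨h, hN x h⟩⟩

lemma invPart_subset' {W N : Set X} : F.InvPartIn W N ⊆ N := fun _ h => h.1

lemma back_prop' {N : Set X} (hN : ∀ x : X, ∀ y ∈ F.Pi x, y ∈ N → x ∈ N)
    {φ : ℤ → X} (hφ : F.IsSolIn Set.univ φ) {j0 : ℤ} (h : φ j0 ∈ N) :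
    ∀ j ≤ j0, φ j ∈ N := by
  have key : ∀ n : ℕ, φ (j0 - n) ∈ N := by
    intro n
    induction n with
    | zero => simpa using h
    | succ n ih =>
      have hs := hφ (j0 - (n + 1))
      have he : j0 - ((n : ℤ) + 1) + 1 = j0 - n := by ring
      rw [he] at hs
      push_cast
      exact hN _ _ hs.1 ih
  intro j hj
  have hji : j = j0 - ((j0 - j).toNat) := by
    rw [Int.toNat_of_nonneg (by omega)]; ring
  rw [hji]; exact key _

lemma compat_invPart' {N : Set X} (hN : F.Compat N) :
    F.Compat (F.InvPartIn Set.univ N) := by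
  intro x hx z hz
  refine ⟨hN x hx.1 hz, ?_⟩
  rw [F.star_eq' hz]
  exact hx.2

lemma invariant_invPart' {N : Set X} (hN : F.Compat N) :
    F.InvariantIn Set.univ (F.InvPartIn Set.univ N) := by
  apply Set.Subset.antisymm F.invPart_subset'
  intro x hx
  obtain ⟨hxN, φ, hsol, ⟨i0, hi0⟩, hval⟩ := hx
  have hmem : ∀ j : ℤ, φ j ∈ F.InvPartIn Set.univ N := by
    intro j
    refine ⟨(hval j).1, ?_⟩
    by_cases h : φ j = F.star (φ j)
    · exact ⟨φ, hsol, ⟨j, h⟩, hval⟩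
    · have hs := (hsol j).1
      simp only [MVField.Pi, if_neg h, Set.mem_singleton_iff] at hs
      exact ⟨φ, hsol, ⟨j + 1, hs⟩, hval⟩
  refine ⟨⟨hxN, φ, hsol, ⟨i0, hi0⟩, hval⟩, φ, hsol, ⟨i0, hi0⟩, ?_⟩
  intro j
  rw [F.lowerC_eq_self' (F.compat_invPart' hN)]
  exact hmem j

lemma backtrap_of_inv_open' {Rp : Set X} (hinv : F.InvariantIn Set.univ Rp)
    (hop : L.Closed Rpᶜ) : F.BackTrappingIn Set.univ Rp := by
  have hcompat : F.Compat Rp := by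
    intro x hx
    have hx' : x ∈ F.InvPartIn Set.univ Rp := by rw [hinv]; exact hx
    obtain ⟨-, φ, hsol, ⟨i0, hi0⟩, hval⟩ := hx'
    have hstar : F.star x ∈ F.lowerC Rp := hi0 ▸ hval i0
    have h2 : F.mclass (F.star x) ⊆ Rp := hstar.2
    rwa [F.mclass_eq' (F.star_spec' x).1] at h2
  have hopen : ∀ z ∈ Rp, ∀ a, L.le z a → a ∈ Rp := by
    intro z hz a hle
    by_contra ha
    have hcz : z ∈ L.cls Rpᶜ := ⟨a, ha, hle⟩
    rw [hop] at hcz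
    exact hcz hz
  refine ⟨Set.subset_univ _, hcompat, ?_⟩
  intro x _ y hy hyR
  by_cases h : x = F.star x
  · have h2 := hy.1
    simp only [MVField.Pi, if_pos h] at h2
    obtain ⟨a, ha, hle⟩ := h2.1
    rw [Set.mem_singleton_iff] at ha
    exact hopen y hyR x (ha ▸ hle)
  · have h2 := hy.1
    simp only [MVField.Pi, if_neg h, Set.mem_singleton_iff] at h2
    rw [h2] at hyR
    have hmx : F.mclass (F.star x) ⊆ Rp := hcompat _ hyR
    rw [F.mclass_eq' (F.star_spec' x).1] at hmx
    exact hmx (F.mclass_spec x).2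

lemma no_tangency_of_backtrap' {Rp : Set X} (hbt : F.BackTrappingIn Set.univ Rp) :
    ¬ F.HasInternalTangencyIn Set.univ Rp := by
  rintro ⟨a, b, φ, hab, hpath, hcl, hfa, hfb, i, hai, hib, hmo⟩
  have key : ∀ n : ℕ, a ≤ b - n → φ (b - n) ∈ Rp := by
    intro n
    induction n with
    | zero => intro _; simpa using hfb
    | succ n ih =>
      intro h
      have h1 := hpath (b - (n + 1)) (by push_cast at h ⊢; omega) (by push_cast at h ⊢; omega)
      have he : b - ((n : ℤ) + 1) + 1 = b - (n : ℤ) := by ring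
      rw [he] at h1
      push_cast
      exact hbt.2.2 _ trivial _ h1 (ih (by push_cast at h ⊢; omega))
  have hiRp : φ i ∈ Rp := by
    have h3 : i = b - ((b - i).toNat) := by
      rw [Int.toNat_of_nonneg (by omega)]; ring
    rw [h3]
    exact key _ (by rw [Int.toNat_of_nonneg (by omega)]; omega)
  exact hmo.2 hiRp

lemma step_mem_invPart' {N : Set X} (hX : F.InvariantIn Set.univ Set.univ)
    (hbt : F.BackTrappingIn Set.univ N) {z a : X}
    (hz : z ∈ F.InvPartIn Set.univ N) (hκ : L.κ a z ≠ 0) :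
    a ∈ F.InvPartIn Set.univ N := by
  have hNc : F.Compat N := hbt.2.1
  by_cases hmem : z ∈ F.mclass a
  · refine ⟨hNc z hz.1 ?_, F.star_eq' hmem ▸ hz.2⟩
    rw [F.mclass_eq' hmem]
    exact (F.mclass_spec a).2
  · -- z is a proper face of a, not in the multivector of a
    have hlea : L.le z a := Relation.ReflTransGen.single hκ
    have hlestar : L.le z (F.star a) := hlea.trans (F.le_star' a)
    have hzPi : z ∈ F.Pi (F.star a) := by
      simp only [MVField.Pi, if_pos (F.star_star' a).symm]
      refine ⟨⟨F.star a, rfl, hlestar⟩, ?_⟩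
      intro hreg
      apply hmem
      have hzm : z ∈ F.mclass (F.star a) := by
        unfold MVField.regPart at hreg
        split at hreg
        · exact hreg
        · exact hreg.1
      rwa [F.mclass_eq' (F.star_spec' a).1] at hzm
    have hstN : F.star a ∈ N := hbt.2.2 _ trivial z ⟨hzPi, trivial⟩ hz.1
    have haN : a ∈ N := by
      have := hNc _ hstN
      rw [F.mclass_eq' (F.star_spec' a).1] at this
      exact this (F.mclass_spec a).2
    -- backward tail: a full solution through star a (from invariance of X)
    have hsa : F.star a ∈ F.InvPartIn Set.univ Set.univ := by
      rw [hX]; trivial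
    obtain ⟨-, ψ, hψsol, ⟨j0, hj0⟩, -⟩ := hsa
    have hj0' : ψ j0 = F.star a := by rw [hj0, F.star_star' a]
    have hback : ∀ j ≤ j0, ψ j ∈ N :=
      F.back_prop' (fun x y hy hyN => hbt.2.2 x trivial y ⟨hy, trivial⟩ hyN) hψsol
        (by rw [hj0']; exact hstN)
    -- forward tail from the solution through star z
    obtain ⟨hzN, φ, hφsol, ⟨i0, hi0⟩, hφval⟩ := hz
    have hi1 : ∃ i1, φ i1 ∈ F.Pi z := by
      by_cases hzz : z = F.star z
      · refine ⟨i0 + 1, ?_⟩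
        have := (hφsol i0).1
        rwa [hi0, ← hzz] at this
      · exact ⟨i0, by simp only [MVField.Pi, if_neg hzz, Set.mem_singleton_iff]; exact hi0⟩
    obtain ⟨i1, hi1⟩ := hi1
    refine ⟨haN, fun t => if t ≤ 0 then ψ (t + j0) else if t = 1 then z else φ (t - 2 + i1),
      ?_, ⟨0, by norm_num [hj0']⟩, ?_⟩
    · intro t
      by_cases h0 : t + 1 ≤ 0
      · have ht : t ≤ 0 := by omega
        simp only [if_pos h0, if_pos ht]
        have := hψsol (t + j0)
        rwa [show t + j0 + 1 = t + 1 + j0 by ring] at this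
      · by_cases ht1 : t + 1 = 1
        · have ht : t ≤ 0 := by omega
          simp only [if_neg h0, if_pos ht1, if_pos ht]
          rw [show t + j0 = j0 by omega, hj0']
          exact ⟨hzPi, trivial⟩
        · by_cases ht : t = 1
          · subst ht
            norm_num
            exact ⟨hi1, trivial⟩
          · simp only [if_neg h0, if_neg ht1, if_neg (by omega : ¬ t ≤ 0), if_neg ht]
            have := hφsol (t - 2 + i1)
            rwa [show t - 2 + i1 + 1 = t + 1 - 2 + i1 by ring] at this
    · intro t
      rw [F.lowerC_eq_self' hNc]
      by_cases ht : t ≤ 0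
      · simp only [if_pos ht]
        exact hback _ (by omega)
      · by_cases ht1 : t = 1
        · simp only [if_neg ht, if_pos ht1]
          exact hzN
        · simp only [if_neg ht, if_neg ht1]
          exact (hφval _).1

lemma invPart_open' {N : Set X} (hX : F.InvariantIn Set.univ Set.univ)
    (hbt : F.BackTrappingIn Set.univ N) :
    L.Closed (F.InvPartIn Set.univ N)ᶜ := by
  have mono : ∀ z a : X, L.le z a → z ∈ F.InvPartIn Set.univ N →
      a ∈ F.InvPartIn Set.univ N := by
    intro z a hle
    induction hle with
    | refl => exact id
    | tail h1 h2 ih => exact fun hz => F.step_mem_invPart' hX hbt (ih hz) h2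
  apply Set.Subset.antisymm
  · intro w hw
    by_contra hwR
    rw [Set.notMem_compl_iff] at hwR
    obtain ⟨b, hb, hle⟩ := hw
    exact hb (mono w b hle hwR)
  · intro w hw
    exact ⟨w, hw, Relation.ReflTransGen.refl⟩

end MVField
end CMVF

/-- Theorem (repeller characterization): for `Rp ⊆ X` the following are equivalent:
(i) `Rp` is a repeller; (ii) `Rp` is invariant and open; (iii) `Rp` is isolated invariant
and open; (iv) `Rp` is isolated invariant, open and a backward trapping region. -/
theorem repeller_characterization (L : Lefschetz R X) (F : MVField L)
    (hX : F.InvariantIn Set.univ Set.univ) (Rp : Set X) :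
    List.TFAE [F.RepellerIn Set.univ Rp,
      F.InvariantIn Set.univ Rp ∧ L.Closed Rpᶜ,
      F.IsoInvIn Set.univ Rp ∧ L.Closed Rpᶜ,
      F.IsoInvIn Set.univ Rp ∧ L.Closed Rpᶜ ∧ F.BackTrappingIn Set.univ Rp] := by
  tfae_have 1 → 2 := by
    rintro ⟨N, hbt, rfl⟩
    exact ⟨F.invariant_invPart' hbt.2.1, F.invPart_open' hX hbt⟩
  tfae_have 2 → 3 := by
    rintro ⟨hinv, hop⟩
    exact ⟨⟨hinv, F.no_tangency_of_backtrap' (F.backtrap_of_inv_open' hinv hop)⟩, hop⟩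
  tfae_have 3 → 4 := by
    rintro ⟨hiso, hop⟩
    exact ⟨hiso, hop, F.backtrap_of_inv_open' hiso.1 hop⟩
  tfae_have 4 → 1 := by
    rintro ⟨hiso, hop, hbt⟩
    exact ⟨Rp, hbt, hiso.1.symm⟩
  tfae_finish
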